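/- In the subgraph equalizer of asynchronous graphs, permutation squares restrict correctly: if f, g : (G,◇_G) → (H,◇_H) are asynchronous graph homomorphisms, p = u₁·u₂ and q = v₁·v₂ are length-2 paths in G with the same endpoints such that p ◇_G q, and all edges of p lie in the equalizer subgraph (f(u₁)=g(u₁), f(u₂)=g(u₂)), then all edges of q lie in the equalizer subgraph as well; in particular the restricted square relation on the equalizer subgraph again satisfies the cube property. -/
import Mathlib


/-! Asynchronous graphs: graphs equipped with a set of permutation squares
satisfying symmetry, determinism and the cube property. -/

/-- A graph together with a relation `Sq` on length-2 paths ("squares"):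
`Sq (u₁, u₂) (v₁, v₂)` means that the square `u₁·u₂ ◇ v₁·v₂` is a permutation square. -/
structure PreAsync where
  V : Type
  E : Type
  src : E → V
  tgt : E → V
  Sq : (E × E) → (E × E) → Prop

namespace PreAsync

/-- Permutation squares only relate composable length-2 paths with the same endpoints. -/
def WellFormed (G : PreAsync) : Prop :=
  ∀ p q, G.Sq p q →
    G.tgt p.1 = G.src p.2 ∧ G.tgt q.1 = G.src q.2 ∧
    G.src p.1 = G.src q.1 ∧ G.tgt p.2 = G.tgt q.2

/-- Every permutation square is symmetric. -/
def SqSymm (G : PreAsync) : Prop := ∀ p q, G.Sq p q → G.Sq q p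

/-- Every permutation square is deterministic. -/
def SqDet (G : PreAsync) : Prop := ∀ p q q', G.Sq p q → G.Sq p q' → q = q'

/-- The cube property. -/
def Cube (G : PreAsync) : Prop :=
  ∀ u1 u2 u3 v1 v2 v3 : G.E,
    G.tgt u1 = G.src u2 → G.tgt u2 = G.src u3 →
    G.tgt v1 = G.src v2 → G.tgt v2 = G.src v3 →
    G.src u1 = G.src v1 → G.tgt u3 = G.tgt v3 →
    ((∃ w3 u2' v2', G.Sq (u2, u3) (u2', w3) ∧ G.Sq (u1, u2') (v1, v2') ∧
        G.Sq (v2', w3) (v2, v3)) ↔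
      (∃ w1 u2'' v2'', G.Sq (u1, u2) (w1, u2'') ∧ G.Sq (u2'', u3) (v2'', v3) ∧
        G.Sq (w1, v2'') (v1, v2)))

/-- An asynchronous graph. -/
def IsAsync (G : PreAsync) : Prop := G.WellFormed ∧ G.SqSymm ∧ G.SqDet ∧ G.Cube

end PreAsync

/-- An asynchronous graph homomorphism: a graph homomorphism transporting
permutation squares to permutation squares. -/
structure AsyncHom (G H : PreAsync) where
  vmap : G.V → H.V
  emap : G.E → H.E
  src_map : ∀ e, H.src (emap e) = vmap (G.src e)
  tgt_map : ∀ e, H.tgt (emap e) = vmap (G.tgt e)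
  sq_map : ∀ p q, G.Sq p q → H.Sq (emap p.1, emap p.2) (emap q.1, emap q.2)

namespace AsyncHom

def id (G : PreAsync) : AsyncHom G G :=
  ⟨fun x => x, fun e => e, fun _ => rfl, fun _ => rfl, fun p q h => h⟩

def comp {G H K : PreAsync} (f : AsyncHom G H) (g : AsyncHom H K) : AsyncHom G K where
  vmap := g.vmap ∘ f.vmap
  emap := g.emap ∘ f.emap
  src_map := fun e => by
    simp only [Function.comp_apply, g.src_map, f.src_map]
  tgt_map := fun e => by
    simp only [Function.comp_apply, g.tgt_map, f.tgt_map]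
  sq_map := fun p q h => g.sq_map _ _ (f.sq_map _ _ h)

end AsyncHom

/-- The equalizer subgraph of a pair of asynchronous graph homomorphisms. -/
def eqGraph {G H : PreAsync} (f g : AsyncHom G H) : PreAsync where
  V := {x : G.V // f.vmap x = g.vmap x}
  E := {u : G.E // f.emap u = g.emap u}
  src u := ⟨G.src u.1, by rw [← f.src_map, ← g.src_map, u.2]⟩
  tgt u := ⟨G.tgt u.1, by rw [← f.tgt_map, ← g.tgt_map, u.2]⟩
  Sq p q := G.Sq (p.1.1, p.2.1) (q.1.1, q.2.1)

/-- permutation squares restrict correctly to the equalizer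
subgraph: if `p ◇_G q` and both edges of `p` are equalized by `f` and `g`, then
so are both edges of `q`; in particular the restricted square relation on the
equalizer subgraph satisfies the cube property. -/
theorem eqGraph_squares_restrict {G H : PreAsync}
    (hG : G.IsAsync) (hH : H.IsAsync) (f g : AsyncHom G H) :
    (∀ u1 u2 v1 v2 : G.E, G.Sq (u1, u2) (v1, v2) →
      f.emap u1 = g.emap u1 → f.emap u2 = g.emap u2 →
      f.emap v1 = g.emap v1 ∧ f.emap v2 = g.emap v2) ∧
    (eqGraph f g).Cube := by
  have key : ∀ u1 u2 v1 v2 : G.E, G.Sq (u1, u2) (v1, v2) →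
      f.emap u1 = g.emap u1 → f.emap u2 = g.emap u2 →
      f.emap v1 = g.emap v1 ∧ f.emap v2 = g.emap v2 := by
    intro u1 u2 v1 v2 hsq h1 h2
    have hf := f.sq_map _ _ hsq
    have hg := g.sq_map _ _ hsq
    rw [h1, h2] at hf
    have := hH.2.2.1 _ _ _ hf hg
    exact Prod.mk.injEq _ _ _ _ ▸ this
  refine ⟨key, ?_⟩
  intro u1 u2 u3 v1 v2 v3 h12 h23 h12' h23' hs ht
  have h12 := congrArg Subtype.val h12
  have h23 := congrArg Subtype.val h23
  have h12' := congrArg Subtype.val h12'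
  have h23' := congrArg Subtype.val h23'
  have hs := congrArg Subtype.val hs
  have ht := congrArg Subtype.val ht
  have hcube := hG.2.2.2 u1.1 u2.1 u3.1 v1.1 v2.1 v3.1 h12 h23 h12' h23' hs ht
  constructor
  · rintro ⟨w3, u2', v2', a, b, c⟩
    obtain ⟨w1, u2'', v2'', a', b', c'⟩ := hcube.mp ⟨w3.1, u2'.1, v2'.1, a, b, c⟩
    obtain ⟨hw1, hu2''⟩ := key _ _ _ _ a' u1.2 u2.2
    obtain ⟨hv2'', _⟩ := key _ _ _ _ b' hu2'' u3.2
    exact ⟨⟨w1, hw1⟩, ⟨u2'', hu2''⟩, ⟨v2'', hv2''⟩, a', b', c'⟩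
  · rintro ⟨w1, u2'', v2'', a', b', c'⟩
    obtain ⟨w3, u2', v2', a, b, c⟩ := hcube.mpr ⟨w1.1, u2''.1, v2''.1, a', b', c'⟩
    obtain ⟨hu2', hw3⟩ := key _ _ _ _ a u2.2 u3.2
    obtain ⟨_, hv2'⟩ := key _ _ _ _ b u1.2 hu2'
    exact ⟨⟨w3, hw3⟩, ⟨u2', hu2'⟩, ⟨v2', hv2'⟩, a, b, c⟩
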